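/- For every probabilistic (shared randomness) classical strategy for the CHSH game, the winning probability is at most 3/4. -/
import Mathlib

lemma chsh_det_bound (s : (Bool → Bool) × (Bool → Bool)) :
    (Finset.univ.filter (fun st : Bool × Bool =>
        (st.1 && st.2) = xor (s.1 st.1) (s.2 st.2))).card ≤ 3 := by
  revert s; decide

theorem chsh_probabilistic_classical_bound
    (p : ((Bool → Bool) × (Bool → Bool)) → ℝ)
    (hp : ∀ s, 0 ≤ p s) (hsum : ∑ s : ((Bool → Bool) × (Bool → Bool)), p s = 1) :
    ∑ s : ((Bool → Bool) × (Bool → Bool)), p s *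
      ((Finset.univ.filter (fun st : Bool × Bool =>
        (st.1 && st.2) = xor (s.1 st.1) (s.2 st.2))).card : ℝ) / 4 ≤ 3 / 4 := by
  calc ∑ s : ((Bool → Bool) × (Bool → Bool)), p s *
      ((Finset.univ.filter (fun st : Bool × Bool =>
        (st.1 && st.2) = xor (s.1 st.1) (s.2 st.2))).card : ℝ) / 4
      ≤ ∑ s : ((Bool → Bool) × (Bool → Bool)), p s * 3 / 4 := by
        apply Finset.sum_le_sum
        intro s _
        have h := chsh_det_bound s
        have : ((Finset.univ.filter (fun st : Bool × Bool =>
          (st.1 && st.2) = xor (s.1 st.1) (s.2 st.2))).card : ℝ) ≤ 3 := by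
          exact_mod_cast h
        have := mul_le_mul_of_nonneg_left this (hp s)
        linarith
    _ = 3 / 4 := by
        simp_rw [mul_div_assoc, ← Finset.sum_mul, hsum, one_mul]
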